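/- The map G ↦ Eₙ + A(G) is a bijection from the set of acyclic digraphs on n labeled vertices to the set M(n) of n×n matrices over ℤ/2 all of whose principal minors equal 1. -/

import Mathlib

open Matrix

/-- The principal minor of `A` indexed by the subset `s` (rows and columns). -/
def pminor {m : Type*} [Fintype m] [DecidableEq m] {R : Type*} [CommRing R]
    (A : Matrix m m R) (s : Finset m) : R :=
  (A.submatrix (fun i : s => (i : m)) (fun j : s => (j : m))).det


/-- Adjacency matrix over `ZMod 2` of a digraph on `n` labeled vertices. -/
def adjMat {n : ℕ} (G : Fin n → Fin n → Bool) : Matrix (Fin n) (Fin n) (ZMod 2) :=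
  Matrix.of fun i j => if G i j then 1 else 0

/-- A digraph is acyclic if it has no directed cycle (of any length). -/
def IsAcyclicDigraph {n : ℕ} (G : Fin n → Fin n → Bool) : Prop :=
  ∀ i, ¬ Relation.TransGen (fun a b => G a b = true) i i

/-!
If `G` is acyclic then `A(G)` is nilpotent, since a nonzero entry of `A(G) ^ k` gives a walk of
length `k`. Principal submatrices of `A(G)` are adjacency matrices of induced subgraphs, again
acyclic, so every principal minor of `1 + A(G)` is the determinant of `1` plus a nilpotent matrix:
a unit of `ℤ/2`, that is `1`.

Conversely let `A` have all principal minors `1`, so its diagonal is `1`, and suppose the digraph of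
its off-diagonal ones has a cycle. Take a closed walk `f` of minimal length `k`. Minimality forbids
chords: every edge from `f p` to a vertex `f q` of the walk ends at `f (p + 1)`. Hence on the vertex
set `S` of the walk each row of `A` has exactly two ones, the diagonal one and the one at the
successor, so the all-ones vector lies in the kernel of the principal submatrix on `S`, whose
determinant is therefore `0`.
-/

open Relation

section Walks

variable {α : Type*} {E : α → α → Prop}

lemma transGen_of_walk {f : ℕ → α} {p q : ℕ} (hpq : p < q)
    (hf : ∀ t, p ≤ t → t < q → E (f t) (f (t + 1))) : TransGen E (f p) (f q) := by
  induction q, hpq using Nat.le_induction with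
  | base => exact .single (hf p le_rfl p.lt_succ_self)
  | succ q hpq ih =>
    exact (ih fun t h₁ h₂ => hf t h₁ (by omega)).tail (hf q (by omega) q.lt_succ_self)

lemma exists_walk_of_transGen {a b : α} (h : TransGen E a b) :
    ∃ m > 0, ∃ f : ℕ → α, f 0 = a ∧ f m = b ∧ ∀ t < m, E (f t) (f (t + 1)) := by
  induction h with
  | @single b hab => exact ⟨1, one_pos, fun t => if t = 0 then a else b, by simp, by simp,
      fun t ht => by simpa [Nat.lt_one_iff.mp ht] using hab⟩
  | @tail b c _ hbc ih =>
    obtain ⟨m, hm, f, hf0, hfm, hf⟩ := ih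
    refine ⟨m + 1, m.succ_pos, Function.update f (m + 1) c, by simp [hf0], by simp,
      fun t ht => ?_⟩
    rcases Nat.lt_succ_iff_lt_or_eq.mp ht with ht | rfl
    · rw [Function.update_of_ne (by omega), Function.update_of_ne (by omega)]
      exact hf t ht
    · simpa [hfm] using hbc

/-- A closed walk of length `k`, unrolled into a `k`-periodic infinite walk. -/
def IsClosedWalk (E : α → α → Prop) (f : ℕ → α) (k : ℕ) : Prop :=
  0 < k ∧ Function.Periodic f k ∧ ∀ t, E (f t) (f (t + 1))

lemma isClosedWalk_comp_mod {g : ℕ → α} {m : ℕ} (hm : 0 < m)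
    (hg : ∀ t, t + 1 < m → E (g t) (g (t + 1))) (hclose : E (g (m - 1)) (g 0)) :
    IsClosedWalk E (fun t => g (t % m)) m := by
  refine ⟨hm, fun t => by simp, fun t => ?_⟩
  have hsucc : (t + 1) % m = (t % m + 1) % m := by simp [Nat.add_mod]
  rcases Nat.lt_or_ge (t % m + 1) m with h | h
  · simpa [hsucc, Nat.mod_eq_of_lt h] using hg _ h
  · have h' : t % m = m - 1 := by have := Nat.mod_lt t hm; omega
    simpa [hsucc, h', Nat.sub_add_cancel hm] using hclose

lemma exists_isClosedWalk_minimal {a : α} (h : TransGen E a a) :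
    ∃ f k, IsClosedWalk E f k ∧ ∀ g m, IsClosedWalk E g m → k ≤ m := by
  classical
  have hex : ∃ k f, IsClosedWalk E f k := by
    obtain ⟨m, hm, f, hf0, hfm, hf⟩ := exists_walk_of_transGen h
    refine ⟨m, _, isClosedWalk_comp_mod hm (fun t ht => hf t (by omega)) ?_⟩
    have hlast := hf (m - 1) (by omega)
    rwa [Nat.sub_add_cancel hm, hfm, ← hf0] at hlast
  obtain ⟨f, hf⟩ := Nat.find_spec hex
  exact ⟨f, _, hf, fun g m hg => Nat.find_min' hex ⟨g, hg⟩⟩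


lemma IsClosedWalk.eq_succ_of_rel {f : ℕ → α} {k : ℕ} (hf : IsClosedWalk E f k)
    (hmin : ∀ g m, IsClosedWalk E g m → k ≤ m) {p q : ℕ} (hp : p < k) (hq : q < k)
    (hpq : E (f p) (f q)) : f q = f (p + 1) := by
  obtain ⟨-, hper, hwalk⟩ := hf
  -- `q'` is the representative of `q` in `(p, p + k]`, and `f q' → … → f (p + k) = f p → f q'`
  -- is a closed walk of length `p + k + 1 - q'`
  set q' := if q ≤ p then q + k else q with hq'
  have hfq' : f q' = f q := by rw [hq']; split_ifs <;> simp [hper q]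
  have hrange : p < q' ∧ q' ≤ p + k := by rw [hq']; split_ifs <;> omega
  have hshort := hmin _ _ (isClosedWalk_comp_mod (g := fun t => f (q' + t))
    (m := p + k + 1 - q') (by omega) (fun t _ => hwalk (q' + t)) (by
      rw [show q' + (p + k + 1 - q' - 1) = p + k by omega, hper p, add_zero, hfq']
      exact hpq))
  rw [← hfq', show q' = p + 1 by omega]

end Walks

section Nilpotent

variable {ι R : Type*} [Fintype ι] [DecidableEq ι]

lemma exists_walk_of_pow_apply_ne_zero [Semiring R] (B : Matrix ι ι R) :
    ∀ (k : ℕ) (i j : ι), (B ^ k) i j ≠ 0 →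
      ∃ f : ℕ → ι, f 0 = i ∧ f k = j ∧ ∀ t < k, B (f t) (f (t + 1)) ≠ 0 := by
  intro k
  induction k with
  | zero =>
    intro i j hij
    obtain rfl : i = j := by_contra fun h => hij (by simp [one_apply_ne h])
    exact ⟨fun _ => i, rfl, rfl, fun t ht => absurd ht t.not_lt_zero⟩
  | succ k ih =>
    intro i j hij
    rw [pow_succ', mul_apply] at hij
    obtain ⟨m, -, hm⟩ := Finset.exists_ne_zero_of_sum_ne_zero hij
    obtain ⟨f, hf0, hfk, hf⟩ := ih m j (right_ne_zero_of_mul hm)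
    refine ⟨fun t => if t = 0 then i else f (t - 1), by simp, by simpa using hfk, fun t ht => ?_⟩
    rcases t with _ | t
    · simpa [hf0] using left_ne_zero_of_mul hm
    · simpa using hf t (by omega)

lemma pow_card_eq_zero_of_acyclic [Semiring R] (B : Matrix ι ι R)
    (hB : ∀ i, ¬ TransGen (fun a b => B a b ≠ 0) i i) : B ^ Fintype.card ι = 0 := by
  ext i j
  by_contra hij
  obtain ⟨f, -, -, hf⟩ := exists_walk_of_pow_apply_ne_zero B _ i j hij
  obtain ⟨x, y, hxy, hfxy⟩ :=
    Fintype.exists_ne_map_eq_of_card_lt (fun t : Fin (Fintype.card ι + 1) => f t) (by simp)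
  obtain ⟨p, q, hpq, hfpq, hq⟩ : ∃ p q, p < q ∧ f p = f q ∧ q ≤ Fintype.card ι := by
    rcases Fin.lt_or_lt_of_ne hxy with h | h
    · exact ⟨x, y, h, hfxy, Nat.lt_succ_iff.mp y.isLt⟩
    · exact ⟨y, x, h, hfxy.symm, Nat.lt_succ_iff.mp x.isLt⟩
  apply hB (f p)
  nth_rw 2 [hfpq]
  exact transGen_of_walk hpq fun t _ ht => hf t (by omega)

lemma isUnit_pminor_one_add_of_acyclic [CommRing R] (B : Matrix ι ι R)
    (hB : ∀ i, ¬ TransGen (fun a b => B a b ≠ 0) i i) (s : Finset ι) :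
    IsUnit (pminor (1 + B) s) := by
  rw [pminor, submatrix_add, Pi.add_apply, Pi.add_apply, submatrix_one _ Subtype.val_injective,
    ← isUnit_iff_isUnit_det]
  refine IsNilpotent.isUnit_one_add ⟨_, pow_card_eq_zero_of_acyclic _ fun i hi => ?_⟩
  exact hB i (TransGen.lift Subtype.val (fun _ _ hab => hab) _ _ hi)

end Nilpotent

lemma ZMod.eq_one_of_isUnit_two {x : ZMod 2} (hx : IsUnit x) : x = 1 := by
  revert x
  decide

section PrincipalMinors

variable {ι : Type*} [Fintype ι] [DecidableEq ι]

lemma pminor_singleton {R : Type*} [CommRing R] (A : Matrix ι ι R) (i : ι) :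
    pminor A {i} = A i i := by
  rw [pminor, det_unique]
  rfl

lemma exists_pminor_eq_zero_of_transGen (A : Matrix ι ι (ZMod 2)) (hdiag : ∀ i, A i i = 1)
    {i : ι} (hi : TransGen (fun a b => a ≠ b ∧ A a b = 1) i i) : ∃ s, pminor A s = 0 := by
  obtain ⟨f, k, hf, hmin⟩ := exists_isClosedWalk_minimal hi
  set S := (Finset.range k).image f
  have hmem : ∀ t, f t ∈ S := fun t =>
    hf.2.1.map_mod_nat t ▸ Finset.mem_image_of_mem f (Finset.mem_range.mpr (Nat.mod_lt t hf.1))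
  have hrow : ∀ x ∈ S, ∑ y ∈ S, A x y = 0 := by
    intro x hx
    obtain ⟨p, hp, rfl⟩ := Finset.mem_image.mp hx
    have hsucc := hf.2.2 p
    rw [Finset.sum_eq_add_of_mem _ _ hx (hmem (p + 1)) hsucc.1, hdiag, hsucc.2]
    · decide
    rintro y hy ⟨hyx, hysucc⟩
    obtain ⟨q, hq, rfl⟩ := Finset.mem_image.mp hy
    by_contra hne
    exact hysucc (hf.eq_succ_of_rel hmin (Finset.mem_range.mp hp) (Finset.mem_range.mp hq)
      ⟨Ne.symm hyx, ZMod.eq_one_of_isUnit_two (Ne.isUnit hne)⟩)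
  refine ⟨S, ?_⟩
  rw [pminor, ← exists_mulVec_eq_zero_iff]
  refine ⟨fun _ => 1, fun h => one_ne_zero (congrFun h ⟨f 0, hmem 0⟩), funext fun x => ?_⟩
  simp only [mulVec, dotProduct, submatrix_apply, mul_one, Pi.zero_apply]
  exact (Finset.sum_coe_sort S (A x)).trans (hrow x x.2)

end PrincipalMinors

lemma adjMat_apply_ne_zero_iff {n : ℕ} (G : Fin n → Fin n → Bool) (i j : Fin n) :
    adjMat G i j ≠ 0 ↔ G i j = true := by
  cases h : G i j <;> simp [adjMat, h]

lemma adjMat_injective {n : ℕ} : Function.Injective (adjMat (n := n)) := fun G G' h =>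
  funext₂ fun i j => Bool.eq_iff_iff.mpr <| by
    rw [← adjMat_apply_ne_zero_iff, h, adjMat_apply_ne_zero_iff]

lemma one_add_adjMat_offDiag {n : ℕ} (A : Matrix (Fin n) (Fin n) (ZMod 2))
    (hdiag : ∀ i, A i i = 1) : 1 + adjMat (fun i j => decide (i ≠ j ∧ A i j = 1)) = A := by
  ext i j
  by_cases hij : i = j
  · subst hij
    simp [adjMat, hdiag]
  · have : ∀ x : ZMod 2, (if x = 1 then 1 else 0) = x := by decide
    simp [adjMat, hij, one_apply_ne hij, this]

theorem stmt_3 {n : ℕ} :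
    Set.BijOn (fun G : Fin n → Fin n → Bool => 1 + adjMat G)
      {G | (∀ i, G i i = false) ∧ IsAcyclicDigraph G}
      {A : Matrix (Fin n) (Fin n) (ZMod 2) | ∀ s : Finset (Fin n), pminor A s = 1} := by
  refine ⟨fun G hG s => ?_, fun G _ G' _ h => adjMat_injective (add_left_cancel h), fun A hA => ?_⟩
  · refine ZMod.eq_one_of_isUnit_two (isUnit_pminor_one_add_of_acyclic _ (fun i hi => ?_) s)
    simp only [adjMat_apply_ne_zero_iff] at hi
    exact hG.2 i hi
  · have hdiag : ∀ i, A i i = 1 := fun i => pminor_singleton A i ▸ hA {i}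
    refine ⟨_, ⟨fun i => by simp, fun i hi => ?_⟩, one_add_adjMat_offDiag A hdiag⟩
    simp only [decide_eq_true_iff] at hi
    obtain ⟨s, hs⟩ := exists_pminor_eq_zero_of_transGen A hdiag hi
    exact zero_ne_one (hs.symm.trans (hA s))
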